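/- arXiv:2603.26565 — 2 statements merged into one kernel-verified Lean document; each statement's English description precedes it below -/
import Mathlib

section
/- Let s ∈ (0,1) with s ≠ 1/2. There exist constants c, C > 0 depending only on s such that for every dyadic interval I ∈ 𝒟: if 0 < s < 1/2 then c |I|^{1−2s} ≤ Cap_s(I) ≤ C |I|^{1−2s}, and if 1/2 < s < 1 then c ≤ Cap_s(I) ≤ C. -/
open MeasureTheory Filter
open scoped ENNReal NNReal

noncomputable section

/-- A dyadic subinterval of `[0,1]`: the interval `[k/2^j, (k+1)/2^j)`. -/
structure DI where
  j : ℕ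
  k : ℕ
  hk : k < 2 ^ j

namespace DI

/-- The underlying set of a dyadic interval. -/
def set (p : DI) : Set ℝ := Set.Ico ((p.k : ℝ) / 2 ^ p.j) (((p.k : ℝ) + 1) / 2 ^ p.j)

/-- The length `|I|` of a dyadic interval. -/
def len (p : DI) : ℝ := 1 / 2 ^ p.j

/-- The left child `I₋`. -/
def left (p : DI) : DI := ⟨p.j + 1, 2 * p.k, by have := p.hk; rw [pow_succ]; omega⟩

/-- The right child `I₊`. -/
def right (p : DI) : DI := ⟨p.j + 1, 2 * p.k + 1, by have := p.hk; rw [pow_succ]; omega⟩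

/-- The root interval `[0,1)`. -/
def root : DI := ⟨0, 0, by norm_num⟩

end DI

/-- The unit interval `[0,1]`. -/
def I01 : Set ℝ := Set.Icc 0 1

/-- The inner product `(f,g) = ∫₀¹ f g`. -/
def inn (f g : ℝ → ℝ) : ℝ := ∫ x in I01, f x * g x

/-- The average `⟨f⟩_I = |I|⁻¹ ∫_I f`. -/
def avg (f : ℝ → ℝ) (p : DI) : ℝ := (1 / p.len) * ∫ x in p.set, f x

/-- The Haar function `h_I = |I|^{-1/2} (𝟙_{I₋} - 𝟙_{I₊})`. -/
def haar (p : DI) : ℝ → ℝ := fun x =>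
  (Real.sqrt p.len)⁻¹ *
    (Set.indicator p.left.set (1 : ℝ → ℝ) x - Set.indicator p.right.set (1 : ℝ → ℝ) x)

/-- Membership in `L²([0,1])`. -/
def MemL2 (f : ℝ → ℝ) : Prop := MemLp f 2 (volume.restrict I01)

/-- The squared homogeneous seminorm `‖f‖_{Ḣ^s}² = Σ_I |I|^{-2s} (f,h_I)²`
(which equals `‖D^s f‖_{L²}²` by orthonormality of the Haar system). -/
def hdotSq (s : ℝ) (f : ℝ → ℝ) : ℝ≥0∞ :=
  ∑' p : DI, ENNReal.ofReal (p.len ^ (-(2 * s)) * (inn f (haar p)) ^ 2)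

/-- The squared Sobolev norm `‖f‖_{H^s}² = ‖D^s f‖_{L²}² + ‖f‖_{L²}²`. -/
def hsNormSq (s : ℝ) (f : ℝ → ℝ) : ℝ≥0∞ :=
  hdotSq s f + ENNReal.ofReal (∫ x in I01, (f x) ^ 2)

/-- The Sobolev norm `‖f‖_{H^s}`. -/
def hsNorm (s : ℝ) (f : ℝ → ℝ) : ℝ≥0∞ := hsNormSq s f ^ (1 / 2 : ℝ)

/-- The homogeneous seminorm `‖f‖_{Ḣ^s}`. -/
def hdotNorm (s : ℝ) (f : ℝ → ℝ) : ℝ≥0∞ := hdotSq s f ^ (1 / 2 : ℝ)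

/-- Membership in the local dyadic fractional Sobolev space `H^s`. -/
def MemHs (s : ℝ) (f : ℝ → ℝ) : Prop := MemL2 f ∧ hsNormSq s f < ⊤

/-- The dyadic Sobolev `s`-capacity `Cap_s(E)`; equals `∞` if no admissible function exists. -/
def capa (s : ℝ) (E : Set ℝ) : ℝ≥0∞ :=
  ⨅ (f : ℝ → ℝ) (_ : MemHs s f) (_ : ∀ᵐ x ∂(volume.restrict E), 1 ≤ f x), hsNormSq s f

/-- The squared `BMO^s` norm: supremum over finite pairwise disjoint families of dyadic
intervals of `Cap_s(⋃ I_k)⁻¹ Σ_k Σ_{J ⊆ I_k} |J|^{-2s} (b,h_J)²`. -/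
def bmoSq (s : ℝ) (b : ℝ → ℝ) : ℝ≥0∞ :=
  ⨆ (F : Finset DI) (_ : (F : Set DI).Pairwise fun p q => Disjoint p.set q.set),
    (∑ p ∈ F, ∑' J : {J : DI // J.set ⊆ p.set},
        ENNReal.ofReal ((J : DI).len ^ (-(2 * s)) * (inn b (haar J)) ^ 2)) /
      capa s (⋃ p ∈ F, p.set)

/-- The `BMO^s` norm. -/
def bmoNorm (s : ℝ) (b : ℝ → ℝ) : ℝ≥0∞ := bmoSq s b ^ (1 / 2 : ℝ)

/-- `b ∈ BMO^s`. -/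
def MemBMOs (s : ℝ) (b : ℝ → ℝ) : Prop := bmoSq s b ≠ ⊤

/-- The truncated (small scales `|J| < 2^{-N}`) `BMO^s`-type quantity appearing in the
definition of `CMO^s`. -/
def cmoTrunc (s : ℝ) (b : ℝ → ℝ) (N : ℕ) : ℝ≥0∞ :=
  ⨆ (F : Finset DI) (_ : (F : Set DI).Pairwise fun p q => Disjoint p.set q.set),
    (∑ p ∈ F, ∑' J : {J : DI // J.set ⊆ p.set ∧ J.len < 1 / 2 ^ N},
        ENNReal.ofReal ((J : DI).len ^ (-(2 * s)) * (inn b (haar J)) ^ 2)) /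
      capa s (⋃ p ∈ F, p.set)

/-- `b ∈ CMO^s`. -/
def MemCMOs (s : ℝ) (b : ℝ → ℝ) : Prop :=
  bmoSq s b ≠ ⊤ ∧ Tendsto (cmoTrunc s b) atTop (nhds 0)

/-- The dyadic paraproduct `Π_b f = Σ_I (b,h_I) ⟨f⟩_I h_I`. -/
def para (b f : ℝ → ℝ) : ℝ → ℝ := fun x => ∑' p : DI, inn b (haar p) * avg f p * haar p x

/-- The operator `Π̃_b f = Σ_I (f,h_I)(b,h_I)|I|⁻¹ 𝟙_I + ⟨f⟩_{[0,1]} ⟨b⟩_{[0,1]}`. -/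
def paraT (b f : ℝ → ℝ) : ℝ → ℝ := fun x =>
  (∑' p : DI, inn f (haar p) * inn b (haar p) * (1 / p.len) * Set.indicator p.set (1 : ℝ → ℝ) x)
    + avg f DI.root * avg b DI.root

/-- The Haar shift `Ш f = Σ_I (f,h_I)(h_{I₋} - h_{I₊})`. -/
def shaar (f : ℝ → ℝ) : ℝ → ℝ := fun x =>
  ∑' p : DI, inn f (haar p) * (haar p.left x - haar p.right x)

/-- The commutator `[b,Ш]f = b·Шf − Ш(b·f)`. -/
def commSh (b f : ℝ → ℝ) : ℝ → ℝ := fun x =>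
  b x * shaar f x - shaar (fun y => b y * f y) x

/-- The dyadic fractional integral `T^s f = Σ_I |I|^s ⟨f⟩_I 𝟙_I`. -/
def Ts (s : ℝ) (f : ℝ → ℝ) : ℝ → ℝ := fun x =>
  ∑' p : DI, p.len ^ s * avg f p * Set.indicator p.set (1 : ℝ → ℝ) x

/-- The modified dyadic fractional derivative `J^s f = Σ_I |I|^{-s}(f,h_I) h_I + 2^{-s}⟨f⟩_{[0,1]}`. -/
def Js (s : ℝ) (f : ℝ → ℝ) : ℝ → ℝ := fun x =>
  (∑' p : DI, p.len ^ (-s) * inn f (haar p) * haar p x) + (2 : ℝ) ^ (-s) * avg f DI.root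

/-- The dyadic fractional derivative `D^s f = Σ_I |I|^{-s}(f,h_I) h_I`. -/
def Ds (s : ℝ) (f : ℝ → ℝ) : ℝ → ℝ := fun x =>
  ∑' p : DI, p.len ^ (-s) * inn f (haar p) * haar p x

/-- The dyadic maximal operator `M f = sup_I ⟨|f|⟩_I 𝟙_I`. -/
def maxOp (f : ℝ → ℝ) : ℝ → ℝ := fun x =>
  ⨆ p : DI, Set.indicator p.set (fun _ => avg (fun y => |f y|) p) x

/-- Compactness of an operator `T` on `H^s`: every sequence in the unit ball of `H^s`
has a subsequence whose image under `T` converges in the `H^s` norm. -/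
def HsCompact (s : ℝ) (T : (ℝ → ℝ) → ℝ → ℝ) : Prop :=
  ∀ f : ℕ → ℝ → ℝ, (∀ n, MemHs s (f n)) → (∀ n, hsNorm s (f n) ≤ 1) →
    ∃ (φ : ℕ → ℕ) (g : ℝ → ℝ), StrictMono φ ∧ MemHs s g ∧
      Tendsto (fun k => hsNorm s (fun x => T (f (φ k)) x - g x)) atTop (nhds 0)

section Basic
open Set

lemma two_pow_pos' (j : ℕ) : (0:ℝ) < 2 ^ j := by positivity

lemma DI.len_pos (p : DI) : 0 < p.len := by unfold DI.len; positivity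

lemma DI.len_le_one (p : DI) : p.len ≤ 1 := by
  unfold DI.len
  rw [div_le_one (two_pow_pos' p.j)]
  exact_mod_cast Nat.one_le_two_pow

lemma DI.set_subset_I01 (p : DI) : p.set ⊆ I01 := by
  intro x hx
  obtain ⟨h1, h2⟩ := hx
  constructor
  · refine le_trans ?_ h1; positivity
  · refine le_of_lt (lt_of_lt_of_le h2 ?_)
    rw [div_le_one (two_pow_pos' p.j)]
    have := p.hk
    have : ((p.k : ℝ) + 1) ≤ (2:ℝ) ^ p.j := by exact_mod_cast this
    exact this

lemma DI.measurableSet_set (p : DI) : MeasurableSet p.set := measurableSet_Ico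

lemma DI.volume_set (p : DI) : volume p.set = ENNReal.ofReal p.len := by
  rw [DI.set, Real.volume_Ico, DI.len]
  congr 1
  field_simp
  ring

lemma DI.left_len (p : DI) : p.left.len = p.len / 2 := by
  simp [DI.left, DI.len, pow_succ]; ring

lemma DI.right_len (p : DI) : p.right.len = p.len / 2 := by
  simp [DI.right, DI.len, pow_succ]; ring

lemma DI.left_union_right (p : DI) : p.left.set ∪ p.right.set = p.set := by
  have h2 : ((2:ℝ)^(p.j+1)) = 2 ^ p.j * 2 := by rw [pow_succ]
  have e1 : ((2 * p.k : ℕ) : ℝ) / 2 ^ (p.j+1) = (p.k : ℝ) / 2 ^ p.j := by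
    push_cast; rw [h2]; field_simp
  have e2 : (((2 * p.k : ℕ) : ℝ) + 1) / 2 ^ (p.j+1) = ((2 * p.k + 1 : ℕ) : ℝ) / 2 ^ (p.j+1) := by
    push_cast; ring_nf
  have e3 : (((2 * p.k + 1 : ℕ) : ℝ) + 1) / 2 ^ (p.j+1) = ((p.k : ℝ) + 1) / 2 ^ p.j := by
    push_cast; rw [h2]; field_simp; ring
  rw [DI.set, DI.set, DI.set, DI.left, DI.right]
  simp only
  rw [e1, e2, e3]
  apply Ico_union_Ico_eq_Ico
  · rw [div_le_div_iff₀ (by positivity) (by positivity)]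
    push_cast; rw [pow_succ]; nlinarith [two_pow_pos' p.j]
  · rw [div_le_div_iff₀ (by positivity) (by positivity)]
    push_cast; rw [pow_succ]; nlinarith [two_pow_pos' p.j]

end Basic
section Basic2
open Set

lemma DI.same_level_disjoint (p q : DI) (hj : p.j = q.j) (hk : p.k ≠ q.k) :
    Disjoint p.set q.set := by
  rw [Set.disjoint_left]
  intro x hx hx'
  simp only [DI.set, Set.mem_Ico] at hx hx'
  obtain ⟨h1, h2⟩ := hx
  obtain ⟨h3, h4⟩ := hx'
  rw [← hj] at h3 h4
  rcases lt_or_gt_of_ne hk with h | h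
  · have hc : ((p.k:ℝ)+1) ≤ (q.k:ℝ) := by exact_mod_cast h
    have := lt_of_lt_of_le h2 (by
      exact div_le_div_of_nonneg_right hc (two_pow_pos' p.j).le |>.trans_eq rfl)
    exact absurd h3 (not_le_of_gt this)
  · have hc : ((q.k:ℝ)+1) ≤ (p.k:ℝ) := by exact_mod_cast h
    have := lt_of_lt_of_le h4 (div_le_div_of_nonneg_right hc (two_pow_pos' p.j).le)
    exact absurd h1 (not_le_of_gt this)

lemma DI.disjoint_left_right (p : DI) : Disjoint p.left.set p.right.set :=
  DI.same_level_disjoint _ _ rfl (by simp [DI.left, DI.right])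

lemma DI.left_subset (p : DI) : p.left.set ⊆ p.set := by
  have := Set.subset_union_left (s := p.left.set) (t := p.right.set)
  rwa [DI.left_union_right] at this

lemma DI.right_subset (p : DI) : p.right.set ⊆ p.set := by
  have := Set.subset_union_right (s := p.left.set) (t := p.right.set)
  rwa [DI.left_union_right] at this

/-- set inclusion from numeric inclusion -/
lemma DI.set_subset (p q : DI) (h1 : q.k * 2 ^ (p.j - q.j) ≤ p.k)
    (h2 : p.k + 1 ≤ (q.k + 1) * 2 ^ (p.j - q.j)) (hj : q.j ≤ p.j) : p.set ⊆ q.set := by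
  apply Set.Ico_subset_Ico
  · rw [div_le_div_iff₀ (by positivity) (by positivity)]
    have e : (2:ℝ) ^ p.j = 2 ^ q.j * 2 ^ (p.j - q.j) := by
      rw [← pow_add]; congr 1; omega
    calc (q.k:ℝ) * 2 ^ p.j = (q.k * 2 ^ (p.j - q.j) : ℕ) * 2 ^ q.j := by push_cast; rw [e]; ring
    _ ≤ (p.k:ℝ) * 2 ^ q.j := by
        have : ((q.k * 2 ^ (p.j - q.j) : ℕ):ℝ) ≤ (p.k:ℝ) := by exact_mod_cast h1
        exact mul_le_mul_of_nonneg_right this (by positivity)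
  · rw [div_le_div_iff₀ (by positivity) (by positivity)]
    have e : (2:ℝ) ^ p.j = 2 ^ q.j * 2 ^ (p.j - q.j) := by
      rw [← pow_add]; congr 1; omega
    calc ((p.k:ℝ)+1) * 2 ^ q.j ≤ ((q.k + 1) * 2 ^ (p.j - q.j) : ℕ) * 2 ^ q.j := by
          have : ((p.k:ℝ)+1) ≤ ((q.k + 1) * 2 ^ (p.j - q.j) : ℕ) := by exact_mod_cast h2
          exact mul_le_mul_of_nonneg_right this (by positivity)
    _ = ((q.k:ℝ)+1) * 2 ^ p.j := by push_cast; rw [e]; ring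

/-- The level-`m` ancestor of `p` (equals `p` itself if `m ≥ p.j`). -/
def DI.anc (p : DI) (m : ℕ) : DI :=
  ⟨min m p.j, p.k / 2 ^ (p.j - m), by
    rcases le_or_gt m p.j with h | h
    · rw [min_eq_left h]
      rw [Nat.div_lt_iff_lt_mul (Nat.pow_pos (by norm_num))]
      calc p.k < 2 ^ p.j := p.hk
      _ = 2 ^ m * 2 ^ (p.j - m) := by rw [← pow_add]; congr 1; omega
    · rw [min_eq_right h.le]
      have : p.j - m = 0 := by omega
      rw [this]; simpa using p.hk⟩

lemma DI.anc_j (p : DI) (m : ℕ) (hm : m ≤ p.j) : (p.anc m).j = m := min_eq_left hm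

lemma DI.anc_self (p : DI) : p.anc p.j = p := by
  show DI.mk _ _ _ = p
  have h1 : min p.j p.j = p.j := min_self _
  have h2 : p.k / 2 ^ (p.j - p.j) = p.k := by simp
  cases p; simp_all [DI.anc]

lemma DI.anc_zero (p : DI) : p.anc 0 = DI.root := by
  show DI.mk _ _ _ = DI.root
  simp [DI.anc, DI.root, Nat.div_eq_of_lt p.hk]

lemma DI.subset_anc (p : DI) (m : ℕ) : p.set ⊆ (p.anc m).set := by
  rcases le_or_gt p.j m with h | h
  · have : p.anc m = p := by
      show DI.mk _ _ _ = p
      have : p.j - m = 0 := by omega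
      cases p with
      | mk j k hk => simp_all [DI.anc]
    rw [this]
  · apply DI.set_subset
    · rw [DI.anc_j _ _ h.le]
      have := Nat.div_mul_le_self p.k (2 ^ (p.j - m))
      simpa [DI.anc] using this
    · rw [DI.anc_j _ _ h.le]
      have h0 : 0 < 2 ^ (p.j - m) := Nat.pow_pos (by norm_num)
      have h1 := Nat.div_add_mod p.k (2 ^ (p.j - m))
      have h2 := Nat.mod_lt p.k h0
      have h3 : (p.k / 2 ^ (p.j - m) + 1) * 2 ^ (p.j - m)
          = 2 ^ (p.j - m) * (p.k / 2 ^ (p.j - m)) + 2 ^ (p.j - m) := by ring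
      simp only [DI.anc]
      omega
    · rw [DI.anc_j _ _ h.le]; omega

end Basic2
section Anc

lemma DI.ext' (p q : DI) (h1 : p.j = q.j) (h2 : p.k = q.k) : p = q := by
  cases p; cases q; simp_all

lemma DI.anc_succ (p : DI) (m : ℕ) (hm : m < p.j) :
    p.anc (m+1) = (p.anc m).left ∨ p.anc (m+1) = (p.anc m).right := by
  have hj1 : (p.anc (m+1)).j = m + 1 := DI.anc_j _ _ (by omega)
  have hj2 : (p.anc m).j = m := DI.anc_j _ _ (by omega)
  have hk1 : (p.anc (m+1)).k = p.k / 2 ^ (p.j - (m+1)) := rfl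
  have hk2 : (p.anc m).k = p.k / 2 ^ (p.j - m) := rfl
  set t := p.k / 2 ^ (p.j - (m+1)) with ht
  have key : p.k / 2 ^ (p.j - m) = t / 2 := by
    rw [ht, Nat.div_div_eq_div_mul]
    congr 1
    rw [← pow_succ]
    congr 1
    omega
  rcases Nat.even_or_odd t with he | ho
  · left
    apply DI.ext'
    · rw [hj1]; simp [DI.left, hj2]
    · rw [hk1]
      show t = (p.anc m).left.k
      simp only [DI.left, hk2, key]
      obtain ⟨c, hc⟩ := he
      omega
  · right
    apply DI.ext'
    · rw [hj1]; simp [DI.right, hj2]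
    · rw [hk1]
      show t = (p.anc m).right.k
      simp only [DI.right, hk2, key]
      rcases ho with ⟨c, hc⟩
      omega

lemma DI.anc_inj (p : DI) {m m' : ℕ} (hm : m ≤ p.j) (hm' : m' ≤ p.j)
    (h : p.anc m = p.anc m') : m = m' := by
  have := congrArg DI.j h
  rwa [DI.anc_j _ _ hm, DI.anc_j _ _ hm'] at this

/-- Uniqueness: a dyadic interval at level `m ≤ p.j` whose set meets `p.set` is `p.anc m`. -/
lemma DI.eq_anc_of_not_disjoint (p q : DI) (hj : q.j ≤ p.j)
    (hnd : ¬ Disjoint q.set p.set) : q = p.anc q.j := by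
  by_contra hne
  apply hnd
  have hjq : (p.anc q.j).j = q.j := DI.anc_j _ _ hj
  have hkne : q.k ≠ (p.anc q.j).k := by
    intro hk
    exact hne (DI.ext' _ _ hjq.symm hk)
  exact (DI.same_level_disjoint q (p.anc q.j) hjq.symm hkne).mono_right (p.subset_anc q.j)

lemma DI.len_anc (p : DI) (m : ℕ) (hm : m ≤ p.j) : (p.anc m).len = 1 / 2 ^ m := by
  rw [DI.len, DI.anc_j _ _ hm]

end Anc
section Integration
open Set MeasureTheory

lemma I01_measurable : MeasurableSet I01 := measurableSet_Icc

instance : IsFiniteMeasure (volume.restrict I01) := by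
  constructor
  rw [Measure.restrict_apply_univ]
  simp [I01]

lemma MemL2.integrableOn {f : ℝ → ℝ} (hf : MemL2 f) : IntegrableOn f I01 :=
  hf.integrable (by norm_num)

lemma setIntegral_in_I01 {f : ℝ → ℝ} (hf : IntegrableOn f I01) {S : Set ℝ}
    (hS : S ⊆ I01) (hSm : MeasurableSet S) :
    ∫ x in I01, S.indicator f x = ∫ x in S, f x := by
  rw [integral_indicator hSm, Measure.restrict_restrict hSm, Set.inter_eq_left.mpr hS]

lemma inn_haar_eq {f : ℝ → ℝ} (hf : IntegrableOn f I01) (p : DI) :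
    inn f (haar p) =
      (Real.sqrt p.len)⁻¹ * ((∫ x in p.left.set, f x) - ∫ x in p.right.set, f x) := by
  have hfun : ∀ x, f x * haar p x =
      (Real.sqrt p.len)⁻¹ * (p.left.set.indicator f x - p.right.set.indicator f x) := by
    intro x
    simp only [haar, Set.indicator, Pi.one_apply]
    split_ifs <;> ring
  have hIl : Integrable (p.left.set.indicator f) (volume.restrict I01) :=
    hf.indicator p.left.measurableSet_set
  have hIr : Integrable (p.right.set.indicator f) (volume.restrict I01) :=
    hf.indicator p.right.measurableSet_set
  rw [inn]
  calc ∫ x in I01, f x * haar p x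
      = ∫ x in I01, (Real.sqrt p.len)⁻¹ *
          (p.left.set.indicator f x - p.right.set.indicator f x) := by
        exact integral_congr_ae (Filter.Eventually.of_forall (fun x => hfun x))
    _ = (Real.sqrt p.len)⁻¹ * ∫ x in I01,
          (p.left.set.indicator f x - p.right.set.indicator f x) := integral_const_mul _ _
    _ = (Real.sqrt p.len)⁻¹ * ((∫ x in p.left.set, f x) - ∫ x in p.right.set, f x) := by
        rw [integral_sub hIl hIr,
          setIntegral_in_I01 hf (p.left_subset.trans p.set_subset_I01) p.left.measurableSet_set,
          setIntegral_in_I01 hf (p.right_subset.trans p.set_subset_I01) p.right.measurableSet_set]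

lemma setIntegral_split {f : ℝ → ℝ} (hf : IntegrableOn f I01) (p : DI) :
    ∫ x in p.set, f x = (∫ x in p.left.set, f x) + ∫ x in p.right.set, f x := by
  rw [← setIntegral_union p.disjoint_left_right p.right.measurableSet_set
    (hf.mono_set (p.left_subset.trans p.set_subset_I01))
    (hf.mono_set (p.right_subset.trans p.set_subset_I01)), p.left_union_right]

lemma sqrt_len_pos (p : DI) : 0 < Real.sqrt p.len := Real.sqrt_pos.mpr p.len_pos

/-- `avg f I₋ − avg f I = (f,h_I)/√|I|` and `avg f I₊ − avg f I = −(f,h_I)/√|I|`. -/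
lemma avg_left_eq {f : ℝ → ℝ} (hf : IntegrableOn f I01) (p : DI) :
    avg f p.left = avg f p + (Real.sqrt p.len)⁻¹ * inn f (haar p) := by
  have h := inn_haar_eq hf p
  have hsq : Real.sqrt p.len * Real.sqrt p.len = p.len := Real.mul_self_sqrt p.len_pos.le
  rw [avg, avg, p.left_len, setIntegral_split hf p, h]
  have hl := p.len_pos
  field_simp
  rw [Real.sq_sqrt hl.le]; ring

lemma avg_right_eq {f : ℝ → ℝ} (hf : IntegrableOn f I01) (p : DI) :
    avg f p.right = avg f p - (Real.sqrt p.len)⁻¹ * inn f (haar p) := by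
  have h := inn_haar_eq hf p
  have hsq : Real.sqrt p.len * Real.sqrt p.len = p.len := Real.mul_self_sqrt p.len_pos.le
  rw [avg, avg, p.right_len, setIntegral_split hf p, h]
  have hl := p.len_pos
  field_simp
  rw [Real.sq_sqrt hl.le]; ring

lemma avg_root_eq {f : ℝ → ℝ} : avg f DI.root = ∫ x in I01, f x := by
  rw [avg]
  have h1 : DI.root.len = 1 := by norm_num [DI.len, DI.root]
  have h2 : DI.root.set = Set.Ico (0:ℝ) 1 := by
    norm_num [DI.set, DI.root]
  rw [h1, h2, I01]
  rw [setIntegral_congr_set MeasureTheory.Ico_ae_eq_Icc]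
  norm_num

end Integration
section Telescope
open MeasureTheory Finset

lemma avg_child_diff {f : ℝ → ℝ} (hf : IntegrableOn f I01) (p q : DI)
    (hq : q = p.left ∨ q = p.right) :
    |avg f q - avg f p| = |inn f (haar p)| * (Real.sqrt p.len)⁻¹ := by
  rcases hq with h | h <;> subst h
  · rw [avg_left_eq hf p]
    rw [add_sub_cancel_left, abs_mul, abs_of_nonneg (by positivity)]
    ring
  · rw [avg_right_eq hf p]
    rw [sub_sub_cancel_left, abs_neg, abs_mul, abs_of_nonneg (by positivity)]
    ring

lemma avg_telescope {f : ℝ → ℝ} (hf : IntegrableOn f I01) (p : DI) (n : ℕ) (hn : n ≤ p.j) :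
    |avg f (p.anc n) - avg f DI.root| ≤
      ∑ m ∈ Finset.range n, |inn f (haar (p.anc m))| * (Real.sqrt (p.anc m).len)⁻¹ := by
  induction n with
  | zero => simp [DI.anc_zero]
  | succ n ih =>
    have hn' : n ≤ p.j := by omega
    have hstep := avg_child_diff hf (p.anc n) (p.anc (n+1)) (DI.anc_succ p n (by omega))
    calc |avg f (p.anc (n+1)) - avg f DI.root|
        ≤ |avg f (p.anc (n+1)) - avg f (p.anc n)| + |avg f (p.anc n) - avg f DI.root| :=
          abs_sub_le _ _ _
      _ ≤ |inn f (haar (p.anc n))| * (Real.sqrt (p.anc n).len)⁻¹ +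
          ∑ m ∈ Finset.range n, |inn f (haar (p.anc m))| * (Real.sqrt (p.anc m).len)⁻¹ := by
          rw [hstep]; exact add_le_add le_rfl (ih hn')
      _ = ∑ m ∈ Finset.range (n+1), |inn f (haar (p.anc m))| * (Real.sqrt (p.anc m).len)⁻¹ := by
          rw [Finset.sum_range_succ]; ring

/-- The key weight identity: `(√|I_m|)⁻¹ = √(|I_m|^{-2s}) · √(r^m)` with `r = 2^{1-2s}`. -/
lemma weight_split (s : ℝ) (p : DI) (m : ℕ) (hm : m ≤ p.j) :
    (Real.sqrt (p.anc m).len)⁻¹ =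
      Real.sqrt ((p.anc m).len ^ (-(2*s))) * Real.sqrt (((2:ℝ) ^ (1-2*s)) ^ m) := by
  have hL : (p.anc m).len = ((2:ℝ) ^ (m:ℕ))⁻¹ := by
    rw [DI.len_anc p m hm, one_div]
  rw [hL, ← Real.sqrt_inv, inv_inv, ← Real.sqrt_mul (by positivity)]
  congr 1
  have h2 : ((2:ℝ) ^ (m:ℕ))⁻¹ = (2:ℝ) ^ (-(m:ℝ)) := by
    rw [← Real.rpow_natCast 2 m, ← Real.rpow_neg (by norm_num)]
  rw [h2, ← Real.rpow_natCast ((2:ℝ) ^ (1-2*s)) m, ← Real.rpow_mul (by norm_num),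
    ← Real.rpow_mul (by norm_num), ← Real.rpow_add (by norm_num), ← Real.rpow_natCast 2 m]
  congr 1
  ring

/-- Cauchy–Schwarz for the telescoping sum. -/
lemma telescope_CS (s : ℝ) {f : ℝ → ℝ} (p : DI) :
    ∑ m ∈ Finset.range p.j, |inn f (haar (p.anc m))| * (Real.sqrt (p.anc m).len)⁻¹ ≤
      Real.sqrt (∑ m ∈ Finset.range p.j,
          (p.anc m).len ^ (-(2*s)) * (inn f (haar (p.anc m)))^2) *
      Real.sqrt (∑ m ∈ Finset.range p.j, ((2:ℝ) ^ (1-2*s)) ^ m) := by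
  set B2 := ∑ m ∈ Finset.range p.j, (p.anc m).len ^ (-(2*s)) * (inn f (haar (p.anc m)))^2
  set W2 := ∑ m ∈ Finset.range p.j, ((2:ℝ) ^ (1-2*s)) ^ m
  have hB2 : 0 ≤ B2 := Finset.sum_nonneg fun m _ => by
    have := (p.anc m).len_pos; positivity
  have hW2 : 0 ≤ W2 := Finset.sum_nonneg fun m _ => by positivity
  have hterm : ∀ m ∈ Finset.range p.j,
      |inn f (haar (p.anc m))| * (Real.sqrt (p.anc m).len)⁻¹ =
      (Real.sqrt ((p.anc m).len ^ (-(2*s))) * |inn f (haar (p.anc m))|) *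
        Real.sqrt (((2:ℝ) ^ (1-2*s)) ^ m) := by
    intro m hm
    rw [weight_split s p m (by exact (Finset.mem_range.mp hm).le)]
    ring
  rw [Finset.sum_congr rfl hterm]
  have hCS := Finset.sum_mul_sq_le_sq_mul_sq (Finset.range p.j)
    (fun m => Real.sqrt ((p.anc m).len ^ (-(2*s))) * |inn f (haar (p.anc m))|)
    (fun m => Real.sqrt (((2:ℝ) ^ (1-2*s)) ^ m))
  have hs1 : ∑ m ∈ Finset.range p.j,
      (Real.sqrt ((p.anc m).len ^ (-(2*s))) * |inn f (haar (p.anc m))|)^2 = B2 := by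
    apply Finset.sum_congr rfl
    intro m _
    rw [mul_pow, Real.sq_sqrt (by have := (p.anc m).len_pos; positivity), sq_abs]
  have hs2 : ∑ m ∈ Finset.range p.j, (Real.sqrt (((2:ℝ) ^ (1-2*s)) ^ m))^2 = W2 := by
    apply Finset.sum_congr rfl
    intro m _
    rw [Real.sq_sqrt (by positivity)]
  rw [hs1, hs2] at hCS
  have hnn : 0 ≤ ∑ m ∈ Finset.range p.j,
      (Real.sqrt ((p.anc m).len ^ (-(2*s))) * |inn f (haar (p.anc m))|) *
        Real.sqrt (((2:ℝ) ^ (1-2*s)) ^ m) :=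
    Finset.sum_nonneg fun m _ => by positivity
  calc (∑ m ∈ Finset.range p.j, _) = Real.sqrt ((∑ m ∈ Finset.range p.j,
        (Real.sqrt ((p.anc m).len ^ (-(2*s))) * |inn f (haar (p.anc m))|) *
          Real.sqrt (((2:ℝ) ^ (1-2*s)) ^ m))^2) := (Real.sqrt_sq hnn).symm
    _ ≤ Real.sqrt (B2 * W2) := Real.sqrt_le_sqrt hCS
    _ = Real.sqrt B2 * Real.sqrt W2 := Real.sqrt_mul hB2 _

end Telescope
section LowerPrep
open MeasureTheory Finset Classical

noncomputable instance : DecidableEq DI := Classical.decEq _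

lemma volume_I01 : volume I01 = 1 := by simp [I01]

/-- `(∫₀¹ f)² ≤ ∫₀¹ f²`. -/
lemma sq_integral_le {f : ℝ → ℝ} (hf : MemL2 f) :
    (∫ x in I01, f x) ^ 2 ≤ ∫ x in I01, (f x) ^ 2 := by
  set a := ∫ x in I01, f x with ha
  have hint : Integrable f (volume.restrict I01) := hf.integrableOn
  have hsq : Integrable (fun x => (f x) ^ 2) (volume.restrict I01) := hf.integrable_sq
  have hnn : 0 ≤ ∫ x in I01, (f x - a) ^ 2 :=
    integral_nonneg fun x => sq_nonneg _
  have hexp : ∫ x in I01, (f x - a) ^ 2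
      = (∫ x in I01, (f x) ^ 2) - 2 * a * a + a ^ 2 * (volume I01).toReal := by
    have h1 : ∀ x, (f x - a) ^ 2 = (f x) ^ 2 - (2 * a) * f x + a ^ 2 := by intro x; ring
    rw [integral_congr_ae (Filter.Eventually.of_forall h1)]
    rw [integral_add (by exact (hsq.sub (hint.const_mul (2*a))) ) (integrable_const _),
      integral_sub hsq (hint.const_mul (2*a)), integral_const, integral_const_mul]
    simp [smul_eq_mul, ← ha, measureReal_def]
    ring
  rw [volume_I01] at hexp
  simp at hexp
  nlinarith [hnn, hexp]

/-- Admissibility gives `1 ≤ ⟨f⟩_I`. -/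
lemma one_le_avg {f : ℝ → ℝ} (hf : MemL2 f) (p : DI)
    (hae : ∀ᵐ x ∂(volume.restrict p.set), 1 ≤ f x) : 1 ≤ avg f p := by
  haveI : IsFiniteMeasure (volume.restrict p.set) := by
    constructor
    rw [Measure.restrict_apply_univ, p.volume_set]
    exact ENNReal.ofReal_lt_top
  have hint : IntegrableOn f p.set := hf.integrableOn.mono_set p.set_subset_I01
  have h1 : ∫ x in p.set, (1:ℝ) ≤ ∫ x in p.set, f x :=
    integral_mono_ae (integrable_const _) hint hae
  rw [setIntegral_const, measureReal_def, p.volume_set, ENNReal.toReal_ofReal p.len_pos.le, smul_eq_mul,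
    mul_one] at h1
  rw [avg, one_div]
  have hl := p.len_pos
  calc (1:ℝ) = p.len⁻¹ * p.len := by field_simp
  _ ≤ p.len⁻¹ * ∫ x in p.set, f x :=
      mul_le_mul_of_nonneg_left h1 (inv_nonneg.mpr hl.le)

/-- Finite part of `hdotSq` along the ancestor chain. -/
lemma hdot_lower (s : ℝ) (f : ℝ → ℝ) (p : DI) :
    ENNReal.ofReal (∑ m ∈ Finset.range p.j,
        (p.anc m).len ^ (-(2*s)) * (inn f (haar (p.anc m)))^2) ≤ hdotSq s f := by
  have hnn : ∀ m ∈ Finset.range p.j,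
      0 ≤ (p.anc m).len ^ (-(2*s)) * (inn f (haar (p.anc m)))^2 := by
    intro m _
    have := (p.anc m).len_pos
    positivity
  rw [ENNReal.ofReal_sum_of_nonneg hnn]
  have hinj : Set.InjOn (p.anc) (Finset.range p.j) := by
    intro m hm m' hm' h
    simp only [Finset.coe_range, Set.mem_Iio] at hm hm'
    exact DI.anc_inj p hm.le hm'.le h
  rw [show (∑ m ∈ Finset.range p.j,
      ENNReal.ofReal ((p.anc m).len ^ (-(2*s)) * (inn f (haar (p.anc m)))^2))
      = ∑ q ∈ (Finset.range p.j).image p.anc,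
        ENNReal.ofReal (q.len ^ (-(2*s)) * (inn f (haar q))^2) from
    (Finset.sum_image (f := fun q => ENNReal.ofReal (q.len ^ (-(2*s)) * (inn f (haar q))^2))
      (fun m hm m' hm' h => hinj hm hm' h)).symm]
  exact ENNReal.sum_le_tsum _

end LowerPrep
section LowerCore
open MeasureTheory Finset

lemma admissible_bound (s : ℝ) {f : ℝ → ℝ} (hf : MemL2 f) (p : DI)
    (hae : ∀ᵐ x ∂(volume.restrict p.set), 1 ≤ f x) :
    ENNReal.ofReal ((1 + ∑ m ∈ Finset.range p.j, ((2:ℝ) ^ (1-2*s)) ^ m)⁻¹) ≤ hsNormSq s f := by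
  set W2 := ∑ m ∈ Finset.range p.j, ((2:ℝ) ^ (1-2*s)) ^ m with hW2def
  set B2 := ∑ m ∈ Finset.range p.j,
      (p.anc m).len ^ (-(2*s)) * (inn f (haar (p.anc m)))^2 with hB2def
  set a := ∫ x in I01, f x with hadef
  set A2 := ∫ x in I01, (f x)^2 with hA2def
  have hW2 : 0 ≤ W2 := Finset.sum_nonneg fun m _ => by positivity
  have hB2 : 0 ≤ B2 := Finset.sum_nonneg fun m _ => by
    have := (p.anc m).len_pos; positivity
  have ha2 : a^2 ≤ A2 := sq_integral_le hf
  have hA2 : 0 ≤ A2 := le_trans (sq_nonneg a) ha2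
  -- step 1 : 1 ≤ a + √B2 √W2
  have h1 : (1:ℝ) ≤ a + Real.sqrt B2 * Real.sqrt W2 := by
    have hone := one_le_avg hf p hae
    have htel := avg_telescope hf.integrableOn p p.j le_rfl
    rw [DI.anc_self, avg_root_eq] at htel
    have hCS := telescope_CS s (f := f) p
    have : avg f p - a ≤ Real.sqrt B2 * Real.sqrt W2 :=
      le_trans (le_abs_self _) (le_trans htel hCS)
    linarith
  -- step 2 : 1 ≤ (1+W2)(A2+B2)
  have hkey : (1:ℝ) ≤ (1 + W2) * (A2 + B2) := by
    set P := Real.sqrt B2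
    set Q := Real.sqrt W2
    have hP : P^2 = B2 := Real.sq_sqrt hB2
    have hQ : Q^2 = W2 := Real.sq_sqrt hW2
    have hPn : 0 ≤ P := Real.sqrt_nonneg _
    have hQn : 0 ≤ Q := Real.sqrt_nonneg _
    nlinarith [sq_nonneg (a*Q - P), sq_nonneg (a + P*Q - 1), mul_nonneg hPn hQn,
      sq_nonneg (a + P*Q)]
  -- step 3 : (1+W2)⁻¹ ≤ A2 + B2
  have hpos : (0:ℝ) < 1 + W2 := by linarith
  have hfin : (1 + W2)⁻¹ ≤ A2 + B2 := by
    have h2 : (1+W2)⁻¹ * 1 ≤ (1+W2)⁻¹ * ((1+W2)*(A2+B2)) :=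
      mul_le_mul_of_nonneg_left hkey (by positivity)
    have h3 : (1+W2)⁻¹ * ((1+W2)*(A2+B2)) = A2+B2 := by field_simp
    rw [mul_one, h3] at h2
    exact h2
  -- step 4 : combine in ℝ≥0∞
  calc ENNReal.ofReal ((1 + W2)⁻¹) ≤ ENNReal.ofReal (B2 + A2) := by
        apply ENNReal.ofReal_le_ofReal; linarith
    _ = ENNReal.ofReal B2 + ENNReal.ofReal A2 := ENNReal.ofReal_add hB2 hA2
    _ ≤ hdotSq s f + ENNReal.ofReal A2 := by
        exact add_le_add (hdot_lower s f p) le_rfl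
    _ = hsNormSq s f := rfl

/-- geometric sum bounds -/
lemma geom_le_of_lt_one {r : ℝ} (h0 : 0 ≤ r) (h1 : r < 1) (n : ℕ) :
    ∑ m ∈ Finset.range n, r ^ m ≤ (1 - r)⁻¹ := by
  have h := geom_sum_mul r n
  have hrn : (0:ℝ) ≤ r ^ n := by positivity
  have hpos : (0:ℝ) < 1 - r := by linarith
  have hid : (∑ m ∈ Finset.range n, r ^ m) * (1 - r) = 1 - r ^ n := by
    linear_combination -(geom_sum_mul r n)
  rw [inv_eq_one_div, le_div_iff₀ hpos]
  linarith

lemma geom_le_of_one_lt {r : ℝ} (h1 : 1 < r) (n : ℕ) :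
    ∑ m ∈ Finset.range n, r ^ m ≤ r ^ n / (r - 1) := by
  have h := geom_sum_mul r n
  have hpos : (0:ℝ) < r - 1 := by linarith
  rw [le_div_iff₀ hpos, h]
  linarith

end LowerCore
section Upper
open MeasureTheory Finset

lemma capa_le {s : ℝ} {E : Set ℝ} {f : ℝ → ℝ} (hf : MemHs s f)
    (hae : ∀ᵐ x ∂(volume.restrict E), 1 ≤ f x) : capa s E ≤ hsNormSq s f :=
  iInf_le_of_le f (iInf_le_of_le hf (iInf_le_of_le hae le_rfl))

lemma integrableOn_one : IntegrableOn (fun _ : ℝ => (1:ℝ)) I01 := by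
  apply (integrableOn_const_iff (C := (1:ℝ))).mpr
  right
  rw [volume_I01]
  norm_num

lemma inn_one_haar (p : DI) : inn (fun _ => (1:ℝ)) (haar p) = 0 := by
  rw [inn_haar_eq integrableOn_one p]
  have h : ∀ q : DI, ∫ x in q.set, (1:ℝ) = q.len := by
    intro q
    rw [setIntegral_const, measureReal_def, q.volume_set, ENNReal.toReal_ofReal q.len_pos.le, smul_eq_mul, mul_one]
  rw [h, h, p.left_len, p.right_len]
  ring

lemma hsNormSq_one (s : ℝ) : hsNormSq s (fun _ => (1:ℝ)) = 1 := by
  rw [hsNormSq, hdotSq]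
  have h0 : ∀ p : DI, ENNReal.ofReal (p.len ^ (-(2*s)) * (inn (fun _ => (1:ℝ)) (haar p)) ^ 2)
      = 0 := by
    intro p
    rw [inn_one_haar]
    simp
  rw [tsum_congr h0]
  simp [volume_I01]

lemma memHs_one (s : ℝ) : MemHs s (fun _ => (1:ℝ)) := by
  refine ⟨memLp_const 1, ?_⟩
  rw [hsNormSq_one]
  norm_num

lemma capa_le_one (s : ℝ) (E : Set ℝ) : capa s E ≤ 1 := by
  have h := capa_le (E := E) (memHs_one s) (Filter.Eventually.of_forall fun x => le_rfl)
  rwa [hsNormSq_one] at h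

/- rpow helpers -/
lemma len_rpow_eq (p : DI) (t : ℝ) : p.len ^ t = (2:ℝ) ^ ((-(p.j:ℝ)) * t) := by
  rw [DI.len, one_div, ← Real.rpow_natCast 2 p.j, ← Real.rpow_neg (by norm_num),
    ← Real.rpow_mul (by norm_num)]

lemma two_pow_rpow (t : ℝ) (n : ℕ) : ((2:ℝ) ^ t) ^ n = (2:ℝ) ^ (t * (n:ℝ)) := by
  rw [← Real.rpow_natCast ((2:ℝ) ^ t) n, ← Real.rpow_mul (by norm_num)]

lemma len_mul_pow_eq_one (p : DI) (t : ℝ) : p.len ^ t * ((2:ℝ) ^ t) ^ p.j = 1 := by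
  rw [len_rpow_eq, two_pow_rpow, ← Real.rpow_add (by norm_num)]
  rw [show (-(p.j:ℝ)) * t + t * (p.j:ℝ) = 0 by ring, Real.rpow_zero]

/- The indicator test function -/
lemma memL2_indicator (p : DI) : MemL2 (p.set.indicator (1 : ℝ → ℝ)) :=
  (memLp_const 1).indicator p.measurableSet_set

lemma integral_indicator_inter (p : DI) {S : Set ℝ} (hS : MeasurableSet S) :
    ∫ x in S, p.set.indicator (1 : ℝ → ℝ) x = (volume (p.set ∩ S)).toReal := by
  rw [integral_indicator p.measurableSet_set, Measure.restrict_restrict p.measurableSet_set]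
  simp [setIntegral_const]
  rfl

lemma inn_indicator_eq (p J : DI) :
    inn (p.set.indicator (1 : ℝ → ℝ)) (haar J) = (Real.sqrt J.len)⁻¹ *
      ((volume (p.set ∩ J.left.set)).toReal - (volume (p.set ∩ J.right.set)).toReal) := by
  rw [inn_haar_eq (memL2_indicator p).integrableOn J,
    integral_indicator_inter p J.left.measurableSet_set,
    integral_indicator_inter p J.right.measurableSet_set]

lemma inn_indicator_zero_of_disjoint (p J : DI) (hd : Disjoint p.set J.set) :
    inn (p.set.indicator (1 : ℝ → ℝ)) (haar J) = 0 := by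
  rw [inn_indicator_eq]
  have h1 : p.set ∩ J.left.set = ∅ :=
    Set.disjoint_iff_inter_eq_empty.mp (hd.mono_right J.left_subset)
  have h2 : p.set ∩ J.right.set = ∅ :=
    Set.disjoint_iff_inter_eq_empty.mp (hd.mono_right J.right_subset)
  rw [h1, h2]
  simp

lemma inn_indicator_zero_of_ge (p J : DI) (hj : p.j ≤ J.j) :
    inn (p.set.indicator (1 : ℝ → ℝ)) (haar J) = 0 := by
  by_cases hd : Disjoint p.set J.set
  · exact inn_indicator_zero_of_disjoint p J hd
  · have hanc : p = J.anc p.j := DI.eq_anc_of_not_disjoint J p hj hd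
    have hsub : J.set ⊆ p.set := by
      have := J.subset_anc p.j
      rwa [← hanc] at this
    rw [inn_indicator_eq]
    have h1 : p.set ∩ J.left.set = J.left.set :=
      Set.inter_eq_self_of_subset_right (J.left_subset.trans hsub)
    have h2 : p.set ∩ J.right.set = J.right.set :=
      Set.inter_eq_self_of_subset_right (J.right_subset.trans hsub)
    rw [h1, h2, J.left.volume_set, J.right.volume_set, J.left_len, J.right_len]
    ring

lemma inn_indicator_anc_sq (p : DI) (m : ℕ) (hm : m < p.j) :
    (inn (p.set.indicator (1 : ℝ → ℝ)) (haar (p.anc m)))^2 = p.len^2 * (2:ℝ)^m := by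
  set J := p.anc m with hJ
  have hsub1 : p.set ⊆ (p.anc (m+1)).set := p.subset_anc (m+1)
  have hsq : ((Real.sqrt J.len)⁻¹)^2 = (2:ℝ)^m := by
    rw [← Real.sqrt_inv, Real.sq_sqrt (by have := J.len_pos; positivity)]
    rw [hJ, DI.len_anc p m hm.le]
    simp
  rcases DI.anc_succ p m hm with h | h
  · have hsubL : p.set ⊆ J.left.set := by rw [← hJ] at h; rwa [h] at hsub1
    have h1 : p.set ∩ J.left.set = p.set := Set.inter_eq_self_of_subset_left hsubL
    have h2 : p.set ∩ J.right.set = ∅ := by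
      apply Set.disjoint_iff_inter_eq_empty.mp
      exact (J.disjoint_left_right.mono_left hsubL)
    rw [inn_indicator_eq, h1, h2, p.volume_set, ENNReal.toReal_ofReal p.len_pos.le]
    simp only [Set.empty_inter, measure_empty, ENNReal.toReal_zero, sub_zero]
    rw [mul_pow, hsq]
    ring
  · have hsubR : p.set ⊆ J.right.set := by rw [← hJ] at h; rwa [h] at hsub1
    have h1 : p.set ∩ J.right.set = p.set := Set.inter_eq_self_of_subset_left hsubR
    have h2 : p.set ∩ J.left.set = ∅ := by
      apply Set.disjoint_iff_inter_eq_empty.mp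
      exact (J.disjoint_left_right.mono_right hsubR).symm
    rw [inn_indicator_eq, h1, h2, p.volume_set, ENNReal.toReal_ofReal p.len_pos.le]
    simp only [Set.empty_inter, measure_empty, ENNReal.toReal_zero, zero_sub]
    rw [mul_pow, hsq]
    ring

end Upper
section UpperInd
open MeasureTheory Finset

lemma len_sq_mul (s : ℝ) (p : DI) :
    p.len^2 * ((2:ℝ)^(1+2*s))^p.j = p.len ^ (1-2*s) := by
  rw [← Real.rpow_natCast p.len 2, len_rpow_eq p ((2:ℕ):ℝ), len_rpow_eq p (1-2*s),
    two_pow_rpow, ← Real.rpow_add (by norm_num)]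
  congr 1
  push_cast
  ring

lemma hdot_indicator_le (s : ℝ) (hs0 : 0 < s) (p : DI) :
    hdotSq s (p.set.indicator (1 : ℝ → ℝ)) ≤
      ENNReal.ofReal (p.len ^ (1-2*s) * (((2:ℝ)^(1+2*s)) - 1)⁻¹) := by
  set R := ((2:ℝ)^(1+2*s)) with hRdef
  have hR : 1 < R := by
    rw [hRdef]
    rw [show (1:ℝ) = (2:ℝ) ^ (0:ℝ) by norm_num]
    exact Real.rpow_lt_rpow_left_iff (by norm_num) |>.mpr (by linarith)
  set g := p.set.indicator (1 : ℝ → ℝ) with hg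
  have hzero : ∀ q ∉ (Finset.range p.j).image p.anc,
      ENNReal.ofReal (q.len ^ (-(2*s)) * (inn g (haar q))^2) = 0 := by
    intro q hq
    have hinn : inn g (haar q) = 0 := by
      rcases le_or_gt p.j q.j with hj | hj
      · exact inn_indicator_zero_of_ge p q hj
      · have hne : q ≠ p.anc q.j := by
          intro he
          exact hq (Finset.mem_image.mpr ⟨q.j, Finset.mem_range.mpr hj, he.symm⟩)
        have hd : Disjoint q.set p.set := by
          by_contra hnd
          exact hne (DI.eq_anc_of_not_disjoint p q hj.le hnd)
        exact inn_indicator_zero_of_disjoint p q hd.symm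
    rw [hinn]
    simp
  rw [hdotSq, tsum_eq_sum hzero]
  have hinj : ∀ m ∈ Finset.range p.j, ∀ m' ∈ Finset.range p.j, p.anc m = p.anc m' → m = m' := by
    intro m hm m' hm' h
    exact DI.anc_inj p (Finset.mem_range.mp hm).le (Finset.mem_range.mp hm').le h
  rw [Finset.sum_image (f := fun q : DI => ENNReal.ofReal (q.len ^ (-(2*s)) * (inn g (haar q))^2))
    hinj]
  have hterm : ∀ m ∈ Finset.range p.j,
      ENNReal.ofReal ((p.anc m).len ^ (-(2*s)) * (inn g (haar (p.anc m)))^2)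
        = ENNReal.ofReal (p.len^2 * R^m) := by
    intro m hm
    have hmlt := Finset.mem_range.mp hm
    rw [hg, inn_indicator_anc_sq p m hmlt]
    congr 1
    have hx : (p.anc m).len ^ (-(2*s)) * ((2:ℝ)^(m:ℕ)) = R^m := by
      rw [len_rpow_eq, DI.anc_j p m hmlt.le, hRdef, two_pow_rpow,
        ← Real.rpow_natCast 2 m, ← Real.rpow_add (by norm_num)]
      congr 1
      ring
    calc (p.anc m).len ^ (-(2*s)) * (p.len^2 * (2:ℝ)^m)
        = p.len^2 * ((p.anc m).len ^ (-(2*s)) * (2:ℝ)^m) := by ring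
      _ = p.len^2 * R^m := by rw [hx]
  rw [Finset.sum_congr rfl hterm]
  have hnn : ∀ m ∈ Finset.range p.j, 0 ≤ p.len^2 * R^m := by
    intro m _
    have := p.len_pos
    positivity
  rw [← ENNReal.ofReal_sum_of_nonneg hnn, ← Finset.mul_sum]
  apply ENNReal.ofReal_le_ofReal
  have hgeom := geom_le_of_one_lt hR p.j
  have hlen2 : (0:ℝ) ≤ p.len^2 := sq_nonneg _
  calc p.len^2 * ∑ m ∈ Finset.range p.j, R^m
      ≤ p.len^2 * (R^p.j / (R-1)) := mul_le_mul_of_nonneg_left hgeom hlen2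
    _ = (p.len^2 * R^p.j) * (R-1)⁻¹ := by ring
    _ = p.len ^ (1-2*s) * (R-1)⁻¹ := by rw [len_sq_mul]

lemma integral_indicator_sq (p : DI) :
    ∫ x in I01, (p.set.indicator (1 : ℝ → ℝ) x)^2 = p.len := by
  have h : ∀ x, (p.set.indicator (1 : ℝ → ℝ) x)^2 = p.set.indicator (1 : ℝ → ℝ) x := by
    intro x
    simp only [Set.indicator]
    split_ifs <;> norm_num
  rw [integral_congr_ae (Filter.Eventually.of_forall h), integral_indicator_inter p I01_measurable,
    Set.inter_eq_self_of_subset_left p.set_subset_I01, p.volume_set,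
    ENNReal.toReal_ofReal p.len_pos.le]

lemma hsNormSq_indicator_le (s : ℝ) (hs0 : 0 < s) (p : DI) :
    hsNormSq s (p.set.indicator (1 : ℝ → ℝ)) ≤
      ENNReal.ofReal ((1 + (((2:ℝ)^(1+2*s)) - 1)⁻¹) * p.len ^ (1-2*s)) := by
  have hR : 1 < ((2:ℝ)^(1+2*s)) := by
    rw [show (1:ℝ) = (2:ℝ) ^ (0:ℝ) by norm_num]
    exact Real.rpow_lt_rpow_left_iff (by norm_num) |>.mpr (by linarith)
  have hlen_le : p.len ≤ p.len ^ (1-2*s) := by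
    nth_rewrite 1 [show p.len = p.len ^ (1:ℝ) by rw [Real.rpow_one]]
    exact Real.rpow_le_rpow_of_exponent_ge p.len_pos p.len_le_one (by linarith)
  rw [hsNormSq, integral_indicator_sq]
  calc hdotSq s (p.set.indicator (1 : ℝ → ℝ)) + ENNReal.ofReal p.len
      ≤ ENNReal.ofReal (p.len ^ (1-2*s) * (((2:ℝ)^(1+2*s)) - 1)⁻¹)
        + ENNReal.ofReal (p.len ^ (1-2*s)) :=
        add_le_add (hdot_indicator_le s hs0 p) (ENNReal.ofReal_le_ofReal hlen_le)
    _ = ENNReal.ofReal (p.len ^ (1-2*s) * (((2:ℝ)^(1+2*s)) - 1)⁻¹ + p.len ^ (1-2*s)) := by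
        rw [ENNReal.ofReal_add]
        · have h1 : (0:ℝ) < ((2:ℝ)^(1+2*s)) - 1 := by linarith
          have := p.len_pos
          positivity
        · have := p.len_pos
          positivity
    _ = ENNReal.ofReal ((1 + (((2:ℝ)^(1+2*s)) - 1)⁻¹) * p.len ^ (1-2*s)) := by
        congr 1
        ring

lemma capa_indicator_le (s : ℝ) (hs0 : 0 < s) (p : DI) :
    capa s p.set ≤ ENNReal.ofReal ((1 + (((2:ℝ)^(1+2*s)) - 1)⁻¹) * p.len ^ (1-2*s)) := by
  have hmem : MemHs s (p.set.indicator (1 : ℝ → ℝ)) := by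
    refine ⟨memL2_indicator p, ?_⟩
    exact lt_of_le_of_lt (hsNormSq_indicator_le s hs0 p) ENNReal.ofReal_lt_top
  have hae : ∀ᵐ x ∂(volume.restrict p.set), 1 ≤ p.set.indicator (1 : ℝ → ℝ) x := by
    filter_upwards [ae_restrict_mem p.measurableSet_set] with x hx
    simp [Set.indicator_of_mem hx]
  exact le_trans (capa_le hmem hae) (hsNormSq_indicator_le s hs0 p)

end UpperInd
section Final
open MeasureTheory Finset

lemma lower_real_lt (s : ℝ) (hlt : s < 1/2) (p : DI) :
    (1 - (2:ℝ)^(2*s-1)) * p.len ^ (1-2*s) ≤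
      (1 + ∑ m ∈ Finset.range p.j, ((2:ℝ) ^ (1-2*s)) ^ m)⁻¹ := by
  set r := (2:ℝ)^(1-2*s) with hrdef
  have hr : 1 < r := by
    rw [hrdef, show (1:ℝ) = (2:ℝ) ^ (0:ℝ) by norm_num]
    exact Real.rpow_lt_rpow_left_iff (by norm_num) |>.mpr (by linarith)
  have hrj : (1:ℝ) ≤ r ^ p.j := one_le_pow₀ hr.le
  have hgeom := geom_le_of_one_lt hr p.j
  have hT : p.len ^ (1-2*s) * r ^ p.j = 1 := len_mul_pow_eq_one p (1-2*s)
  have hA : p.len ^ (1-2*s) = (r ^ p.j)⁻¹ := eq_inv_of_mul_eq_one_left hT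
  have hinv : ((2:ℝ)^(2*s-1)) = r⁻¹ := by
    rw [hrdef, ← Real.rpow_neg (by norm_num)]
    congr 1
    ring
  set W := ∑ m ∈ Finset.range p.j, r ^ m with hWdef
  have hW0 : 0 ≤ W := Finset.sum_nonneg fun m _ => by positivity
  have hpos : (0:ℝ) < 1 + W := by linarith
  have h1 : r ≠ 0 := by linarith
  have h2 : r - 1 ≠ 0 := sub_ne_zero.mpr hr.ne'
  have hW : 1 + W ≤ r ^ p.j * (r/(r-1)) := by
    have hsplit : r ^ p.j * (r/(r-1)) = r ^ p.j + r ^ p.j/(r-1) := by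
      field_simp
      ring
    linarith [hgeom, hrj]
  have key : (r ^ p.j * (r/(r-1)))⁻¹ ≤ (1 + W)⁻¹ := by
    apply inv_anti₀ hpos hW
  have heq : (r ^ p.j * (r/(r-1)))⁻¹ = (1 - r⁻¹) * (r ^ p.j)⁻¹ := by
    rw [mul_inv, inv_div, mul_comm]
    congr 1
    rw [sub_div, div_self h1, one_div]
  rw [hinv, hA]
  rw [heq] at key
  exact key

lemma lower_real_gt (s : ℝ) (hgt : 1/2 < s) (p : DI) :
    (1 + (1 - (2:ℝ)^(1-2*s))⁻¹)⁻¹ ≤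
      (1 + ∑ m ∈ Finset.range p.j, ((2:ℝ) ^ (1-2*s)) ^ m)⁻¹ := by
  set r := (2:ℝ)^(1-2*s) with hrdef
  have hr0 : 0 < r := by positivity
  have hr : r < 1 := by
    rw [hrdef, show (1:ℝ) = (2:ℝ) ^ (0:ℝ) by norm_num]
    exact Real.rpow_lt_rpow_left_iff (by norm_num) |>.mpr (by linarith)
  have hgeom := geom_le_of_lt_one hr0.le hr p.j
  set W := ∑ m ∈ Finset.range p.j, r ^ m with hWdef
  have hW0 : 0 ≤ W := Finset.sum_nonneg fun m _ => by positivity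
  apply inv_anti₀ (by linarith)
  linarith

theorem capacity_of_dyadic_interval' (s : ℝ) (hs : s ∈ Set.Ioo (0 : ℝ) 1) (hs' : s ≠ 1 / 2) :
    ∃ c C : ℝ, 0 < c ∧ 0 < C ∧ ∀ p : DI,
      (s < 1 / 2 →
        ENNReal.ofReal (c * p.len ^ (1 - 2 * s)) ≤ capa s p.set ∧
        capa s p.set ≤ ENNReal.ofReal (C * p.len ^ (1 - 2 * s))) ∧
      (1 / 2 < s →
        ENNReal.ofReal c ≤ capa s p.set ∧ capa s p.set ≤ ENNReal.ofReal C) := by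
  obtain ⟨hs0, hs1⟩ := hs
  rcases lt_or_gt_of_ne hs' with hlt | hgt
  · -- case s < 1/2
    have hR : 1 < ((2:ℝ)^(1+2*s)) := by
      rw [show (1:ℝ) = (2:ℝ) ^ (0:ℝ) by norm_num]
      exact Real.rpow_lt_rpow_left_iff (by norm_num) |>.mpr (by linarith)
    have hc : (0:ℝ) < 1 - (2:ℝ)^(2*s-1) := by
      have : (2:ℝ)^(2*s-1) < 1 := by
        rw [show (1:ℝ) = (2:ℝ) ^ (0:ℝ) by norm_num]
        exact Real.rpow_lt_rpow_left_iff (by norm_num) |>.mpr (by linarith)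
      linarith
    have hCpos : (0:ℝ) < 1 + (((2:ℝ)^(1+2*s)) - 1)⁻¹ := by
      have h2 : (0:ℝ) < ((2:ℝ)^(1+2*s)) - 1 := by linarith
      have := inv_pos.mpr h2
      linarith
    refine ⟨1 - (2:ℝ)^(2*s-1), 1 + (((2:ℝ)^(1+2*s)) - 1)⁻¹, hc, hCpos, ?_⟩
    intro p
    constructor
    · intro _
      constructor
      · apply le_iInf; intro f
        apply le_iInf; intro hf
        apply le_iInf; intro hae
        refine le_trans (ENNReal.ofReal_le_ofReal (lower_real_lt s hlt p))
          (admissible_bound s hf.1 p hae)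
      · exact capa_indicator_le s hs0 p
    · intro h; linarith
  · -- case s > 1/2
    have hr : (2:ℝ)^(1-2*s) < 1 := by
      rw [show (1:ℝ) = (2:ℝ) ^ (0:ℝ) by norm_num]
      exact Real.rpow_lt_rpow_left_iff (by norm_num) |>.mpr (by linarith)
    have hrpos : (0:ℝ) < (2:ℝ)^(1-2*s) := by positivity
    have hcpos : (0:ℝ) < (1 + (1 - (2:ℝ)^(1-2*s))⁻¹)⁻¹ := by
      have h1 : (0:ℝ) < 1 - (2:ℝ)^(1-2*s) := by linarith
      have h2 : (0:ℝ) < (1 - (2:ℝ)^(1-2*s))⁻¹ := inv_pos.mpr h1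
      have h3 : (0:ℝ) < 1 + (1 - (2:ℝ)^(1-2*s))⁻¹ := by linarith
      exact inv_pos.mpr h3
    refine ⟨(1 + (1 - (2:ℝ)^(1-2*s))⁻¹)⁻¹, 1, hcpos, one_pos, ?_⟩
    intro p
    constructor
    · intro h; linarith
    · intro _
      constructor
      · apply le_iInf; intro f
        apply le_iInf; intro hf
        apply le_iInf; intro hae
        refine le_trans (ENNReal.ofReal_le_ofReal (lower_real_gt s hgt p))
          (admissible_bound s hf.1 p hae)
      · rw [ENNReal.ofReal_one]
        exact capa_le_one s p.set

end Final
/-- For `s ∈ (0,1)`, `s ≠ 1/2`, there are `c, C > 0` depending only on `s`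
such that for every dyadic interval `I`: `Cap_s(I) ≈ |I|^{1−2s}` if `0 < s < 1/2`, and
`Cap_s(I) ≈ 1` if `1/2 < s < 1`. -/
theorem capacity_of_dyadic_interval (s : ℝ) (hs : s ∈ Set.Ioo (0 : ℝ) 1) (hs' : s ≠ 1 / 2) :
    ∃ c C : ℝ, 0 < c ∧ 0 < C ∧ ∀ p : DI,
      (s < 1 / 2 →
        ENNReal.ofReal (c * p.len ^ (1 - 2 * s)) ≤ capa s p.set ∧
        capa s p.set ≤ ENNReal.ofReal (C * p.len ^ (1 - 2 * s))) ∧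
      (1 / 2 < s →
        ENNReal.ofReal c ≤ capa s p.set ∧ capa s p.set ≤ ENNReal.ofReal C) := by
  exact capacity_of_dyadic_interval' s hs hs'
end
end

section
/- Let s ∈ (0,1), let {μ(I)}_{I∈𝒟} be a family of nonnegative reals, and suppose there is a constant C > 0 such that Σ_{I∈𝒟} ⟨f⟩_I² μ(I) ≤ C ‖f‖_{H^s}² for all real-valued f ∈ H^s. Then {μ(I)}_{I∈𝒟} is an s-Carleson sequence with ‖μ‖_{sC}² ≤ C (dyadic fractional Carleson embedding, necessity). -/
open MeasureTheory Filter
open scoped ENNReal NNReal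

noncomputable section

/-- The squared `s`-Carleson constant of a nonnegative sequence `μ` indexed by dyadic
intervals. -/
def carlSq (s : ℝ) (μ : DI → ℝ) : ℝ≥0∞ :=
  ⨆ (F : Finset DI) (_ : (F : Set DI).Pairwise fun p q => Disjoint p.set q.set),
    (∑ p ∈ F, ∑' J : {J : DI // J.set ⊆ p.set}, ENNReal.ofReal (μ J)) /
      capa s (⋃ p ∈ F, p.set)


namespace DI

lemma len_pos_s14 (p : DI) : 0 < p.len := by unfold DI.len; positivity

lemma set_nonempty (p : DI) : p.set.Nonempty := by
  refine Set.nonempty_Ico.2 ?_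
  have h2 : (0:ℝ) < 2 ^ p.j := by positivity
  rw [div_lt_div_iff₀ h2 h2]
  nlinarith

lemma measurableSet_set_s14 (p : DI) : MeasurableSet p.set := measurableSet_Ico

lemma volume_set_s14 (p : DI) : volume p.set = ENNReal.ofReal p.len := by
  unfold DI.set DI.len
  rw [Real.volume_Ico]
  congr 1
  ring

lemma set_subset_I01_s14 (p : DI) : p.set ⊆ I01 := by
  intro x hx
  obtain ⟨h1, h2⟩ := hx
  have hpow : (0:ℝ) < 2 ^ p.j := by positivity
  constructor
  · have : (0:ℝ) ≤ (p.k : ℝ) / 2 ^ p.j := by positivity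
    linarith
  · have hk : (p.k : ℝ) + 1 ≤ 2 ^ p.j := by
      have := p.hk
      have : (p.k : ℝ) + 1 ≤ ((2:ℝ) ^ p.j : ℝ) := by exact_mod_cast Nat.succ_le_of_lt this
      simpa using this
    have hb : ((p.k : ℝ) + 1) / 2 ^ p.j ≤ 1 := by
      rw [div_le_one hpow]; exact hk
    linarith

end DI

/-- (Dyadic fractional Carleson embedding, necessity.) For `s ∈ (0,1)`,
if `Σ_I ⟨f⟩_I² μ(I) ≤ C‖f‖_{H^s}²` for all real-valued `f ∈ H^s`, then `μ` is an
`s`-Carleson sequence with `‖μ‖_{sC}² ≤ C`. -/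
theorem carleson_embedding_necessity (s : ℝ) (hs : s ∈ Set.Ioo (0 : ℝ) 1)
    (μ : DI → ℝ) (hμ : ∀ p, 0 ≤ μ p) (C : ℝ) (hC : 0 < C)
    (h : ∀ f : ℝ → ℝ, MemHs s f →
      (∑' p : DI, ENNReal.ofReal ((avg f p) ^ 2 * μ p)) ≤ ENNReal.ofReal C * hsNormSq s f) :
    carlSq s μ ≤ ENNReal.ofReal C := by
  refine iSup₂_le fun F hF => ?_
  set E : Set ℝ := ⋃ p ∈ F, p.set with hEdef
  refine ENNReal.div_le_of_le_mul ?_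
  have hC0 : ENNReal.ofReal C ≠ 0 := by
    simp [ENNReal.ofReal_eq_zero, not_le, hC]
  have hCt : ENNReal.ofReal C ≠ ⊤ := ENNReal.ofReal_ne_top
  rw [mul_comm, ← ENNReal.div_le_iff_le_mul (Or.inl hC0) (Or.inl hCt)]
  unfold capa
  refine le_iInf fun f => le_iInf fun hf => le_iInf fun hadm => ?_
  rw [ENNReal.div_le_iff_le_mul (Or.inl hC0) (Or.inl hCt), mul_comm]
  -- key analytic facts about admissible f
  haveI : IsFiniteMeasure (volume.restrict I01) := by
    constructor
    rw [Measure.restrict_apply_univ]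
    simp [I01]
  have hfint : IntegrableOn f I01 := hf.1.integrable (by norm_num)
  have havg : ∀ p ∈ F, ∀ J : DI, J.set ⊆ p.set → 1 ≤ avg f J := by
    intro p hp J hJp
    have hJE : J.set ⊆ E := by
      rw [hEdef]
      exact hJp.trans (Set.subset_biUnion_of_mem hp)
    have hJ1 : J.set ⊆ I01 := J.set_subset_I01_s14
    have hfJ : IntegrableOn f J.set := hfint.mono_set hJ1
    have h1J : IntegrableOn (fun _ => (1:ℝ)) J.set := by
      refine integrableOn_const ?_
      rw [J.volume_set_s14]; exact ENNReal.ofReal_ne_top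
    have hae : (fun _ => (1:ℝ)) ≤ᵐ[volume.restrict J.set] f :=
      ae_restrict_of_ae_restrict_of_subset hJE hadm
    have hint : J.len ≤ ∫ x in J.set, f x := by
      have := setIntegral_mono_ae_restrict h1J hfJ hae
      have h1 : ∫ _ in J.set, (1:ℝ) = J.len := by
        rw [setIntegral_const, smul_eq_mul, mul_one, measureReal_def, J.volume_set_s14,
          ENNReal.toReal_ofReal J.len_pos_s14.le]
      linarith
    have hlp := J.len_pos_s14
    unfold avg
    calc (1:ℝ) = (1 / J.len) * J.len := by field_simp
    _ ≤ (1 / J.len) * ∫ x in J.set, f x := by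
        apply mul_le_mul_of_nonneg_left hint
        positivity
  -- termwise bound and regrouping
  set g : DI → ℝ≥0∞ := fun J => ENNReal.ofReal ((avg f J) ^ 2 * μ J) with hg
  have hstep : ∀ p ∈ F,
      (∑' J : {J : DI // J.set ⊆ p.set}, ENNReal.ofReal (μ J))
        ≤ ∑' J : {J : DI // J.set ⊆ p.set}, g J := by
    intro p hp
    refine ENNReal.tsum_le_tsum fun J => ?_
    have h1 : 1 ≤ avg f (J : DI) := havg p hp J J.2
    refine ENNReal.ofReal_le_ofReal ?_
    have ha2 : 1 ≤ (avg f (J : DI)) ^ 2 := by nlinarith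
    exact le_mul_of_one_le_left (hμ (J : DI)) ha2
  calc (∑ p ∈ F, ∑' J : {J : DI // J.set ⊆ p.set}, ENNReal.ofReal (μ J))
      ≤ ∑ p ∈ F, ∑' J : {J : DI // J.set ⊆ p.set}, g J :=
        Finset.sum_le_sum hstep
    _ = ∑ p ∈ F, ∑' J : DI, Set.indicator {J : DI | J.set ⊆ p.set} g J := by
        refine Finset.sum_congr rfl fun p _ => ?_
        exact tsum_subtype {J : DI | J.set ⊆ p.set} g
    _ = ∑' J : DI, ∑ p ∈ F, Set.indicator {J : DI | J.set ⊆ p.set} g J := by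
        rw [Summable.tsum_finsetSum (fun p _ => ENNReal.summable)]
    _ ≤ ∑' J : DI, g J := by
        refine ENNReal.tsum_le_tsum fun J => ?_
        by_cases hJ : ∃ p ∈ F, J.set ⊆ p.set
        · obtain ⟨p0, hp0F, hp0⟩ := hJ
          have hz : ∀ q ∈ F, q ≠ p0 →
              Set.indicator {K : DI | K.set ⊆ q.set} g J = 0 := by
            intro q hqF hq
            refine Set.indicator_of_notMem (fun hqJ => ?_) g
            have hdisj : Disjoint q.set p0.set :=
              hF (Finset.mem_coe.2 hqF) (Finset.mem_coe.2 hp0F) hq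
            have hempty : J.set ⊆ (∅ : Set ℝ) :=
              (Set.subset_inter hqJ hp0).trans hdisj.le_bot
            exact absurd (hempty J.set_nonempty.some_mem) (Set.notMem_empty _)
          rw [Finset.sum_eq_single_of_mem p0 hp0F hz]
          exact le_of_eq
            (Set.indicator_of_mem (show J ∈ {K : DI | K.set ⊆ p0.set} from hp0) g)
        · push_neg at hJ
          have hz : ∀ q ∈ F, Set.indicator {K : DI | K.set ⊆ q.set} g J = 0 := by
            intro q hqF
            have : J ∉ {K : DI | K.set ⊆ q.set} := fun hc => hJ q hqF hc
            exact Set.indicator_of_notMem this g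
          rw [Finset.sum_eq_zero hz]
          exact zero_le
    _ ≤ ENNReal.ofReal C * hsNormSq s f := h f hf
end
end
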